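/- arXiv:0801.3780 — 3 statements merged into one kernel-verified Lean document; each statement's English description precedes it below -/
import Mathlib

section
/- The following three conditions are equivalent: (a) Condition (C), i.e. P(∪_{n≥1} [X^{(n)} ∈ S°]) > 0; (b) P[T < +∞] = 1; (c) P(∪_{n≥1} [X^{(n)} ∈ S°]) = 1. -/
/-!
If `X^{(m)} ∈ S°` with positive probability, then the products `X_{km+m} ⋯ X_{km+1}` over the
disjoint blocks of length `m` are i.i.d. copies of `X^{(m)}`, so by the second Borel–Cantelli
lemma one of them lies in `S°` almost surely. Since `S° S ⊆ S°` and
`X^{(km+m)} = (X_{km+m} ⋯ X_{km+1}) X^{(km)}` with `X^{(km)} ∈ S`, this puts `X^{(km+m)}` in `S°`.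
-/

open MeasureTheory ProbabilityTheory Filter Topology Matrix Finset

noncomputable section

namespace StablePaper

/-- The set of `q × q` matrices. -/
abbrev Mat (q : ℕ) := Matrix (Fin q) (Fin q) ℝ

instance {q : ℕ} : MeasurableSpace (Mat q) := MeasurableSpace.pi

/-- Membership in the semigroup `S`: nonnegative entries, every row and every
column contains a strictly positive entry. -/
def memS {q : ℕ} (g : Mat q) : Prop :=
  (∀ i j, 0 ≤ g i j) ∧ (∀ i, ∃ j, 0 < g i j) ∧ (∀ j, ∃ i, 0 < g i j)

/-- Membership in `S°`: all entries strictly positive. -/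
def memS0 {q : ℕ} (g : Mat q) : Prop := ∀ i j, 0 < g i j

/-- The norm `‖x‖ = ∑ i, |x i|` on `ℝ^q`. -/
def nrm {q : ℕ} (x : Fin q → ℝ) : ℝ := ∑ i, |x i|

/-- The cone `C̄` of vectors with nonnegative coordinates. -/
def inCbar {q : ℕ} (x : Fin q → ℝ) : Prop := ∀ i, 0 ≤ x i

/-- `B̄`: unit vectors of `C̄`. -/
def inBbar {q : ℕ} (x : Fin q → ℝ) : Prop := inCbar x ∧ nrm x = 1

/-- `B`: unit vectors with strictly positive coordinates. -/
def inB {q : ℕ} (x : Fin q → ℝ) : Prop := (∀ i, 0 < x i) ∧ nrm x = 1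

/-- The projective action `g · x = gx / ‖gx‖`. -/
def proj {q : ℕ} (g : Mat q) (x : Fin q → ℝ) : Fin q → ℝ :=
  fun i => g.mulVec x i / nrm (g.mulVec x)

/-- `m(x,y) = min { x i / y i : y i > 0 }`. -/
def mfun {q : ℕ} (x y : Fin q → ℝ) : ℝ :=
  sInf ((fun i => x i / y i) '' {i | 0 < y i})

/-- The distance `d(x,y) = φ(m(x,y) m(y,x))` with `φ(s) = (1-s)/(1+s)`. -/
def dB {q : ℕ} (x y : Fin q → ℝ) : ℝ :=
  (1 - mfun x y * mfun y x) / (1 + mfun x y * mfun y x)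

/-- The cocycle `ξ(g,x) = ln ‖gx‖`. -/
def xi {q : ℕ} (g : Mat q) (x : Fin q → ℝ) : ℝ := Real.log (nrm (g.mulVec x))

/-- `X^{(n)} = X_n ⋯ X_1` (with `X^{(0)}` the identity matrix). -/
def Xprod {q : ℕ} {Ω : Type} (X : ℕ → Ω → Mat q) : ℕ → Ω → Mat q
  | 0 => fun _ => 1
  | n + 1 => fun ω => X (n + 1) ω * Xprod X n ω

/-- `Y^{(n)} = Y_1 ⋯ Y_n` where `Y_k = X_kᵀ`. -/
def Yprod {q : ℕ} {Ω : Type} (X : ℕ → Ω → Mat q) : ℕ → Ω → Mat q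
  | 0 => fun _ => 1
  | n + 1 => fun ω => Yprod X n ω * (X (n + 1) ω)ᵀ

/-- `Ỹ^{(n)} = Y_n ⋯ Y_1` where `Y_k = X_kᵀ`. -/
def Ytil {q : ℕ} {Ω : Type} (X : ℕ → Ω → Mat q) : ℕ → Ω → Mat q
  | 0 => fun _ => 1
  | n + 1 => fun ω => (X (n + 1) ω)ᵀ * Ytil X n ω

/-- The hitting time `T = inf { n ≥ 1 : X^{(n)} ∈ S° }` (equal to `⊤` if no such `n`). -/
def hitT {q : ℕ} {Ω : Type} (X : ℕ → Ω → Mat q) (ω : Ω) : ℕ∞ :=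
  ⨅ (n : ℕ) (_ : 1 ≤ n ∧ memS0 (Xprod X n ω)), (n : ℕ∞)

/-- The indicator `1_{[T ≤ n]}`. -/
def indT {q : ℕ} {Ω : Type} (X : ℕ → Ω → Mat q) (n : ℕ) (ω : Ω) : ℝ :=
  if hitT X ω ≤ (n : ℕ∞) then 1 else 0

/-- Condition (C). -/
def CondC {q : ℕ} {Ω : Type} [MeasurableSpace Ω] (P : Measure Ω)
    (X : ℕ → Ω → Mat q) : Prop :=
  0 < P {ω | ∃ n, 1 ≤ n ∧ memS0 (Xprod X n ω)}

/-- `(X_n)` is an i.i.d. sequence. -/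
def IID {q : ℕ} {Ω : Type} [MeasurableSpace Ω] (P : Measure Ω)
    (X : ℕ → Ω → Mat q) : Prop :=
  (∀ n, Measurable (X n)) ∧
  iIndepFun X P ∧
  ∀ n, Measure.map (X n) P = Measure.map (X 1) P

/-- `N₁`-functional of a matrix: the sum of all entries. -/
def N1fun {q : ℕ} (g : Mat q) : ℝ := ∑ i, ∑ j, g i j

/-- `V₁`-functional of a matrix: the minimal row sum. -/
def V1fun {q : ℕ} (g : Mat q) : ℝ := sInf {r : ℝ | ∃ i, r = ∑ j, g i j}

/-- The spectral radius of a real matrix (via its complex spectrum). -/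
def specRad {q : ℕ} (g : Mat q) : ℝ :=
  (spectralRadius ℂ (g.map (algebraMap ℝ ℂ))).toReal

/-- A slowly varying function `L : (0,∞) → (0,∞)`. -/
def SlowlyVarying (L : ℝ → ℝ) : Prop :=
  (∀ u : ℝ, 0 < u → 0 < L u) ∧
  ∀ l : ℝ, 0 < l → Tendsto (fun u => L (l * u) / L u) atTop (𝓝 1)

/-- Convolution of two measures on `ℝ`. -/
def mconv (ρ₁ ρ₂ : Measure ℝ) : Measure ℝ :=
  Measure.map (fun p : ℝ × ℝ => p.1 + p.2) (ρ₁.prod ρ₂)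

/-- `n`-fold convolution power. -/
def convPow (ρ : Measure ℝ) : ℕ → Measure ℝ
  | 0 => Measure.dirac 0
  | n + 1 => mconv (convPow ρ n) ρ

/-- A stable law of index `α`: a non-Dirac probability measure `ρ` such that for
every `n ≥ 1` there is `d_n ∈ ℝ` with `ρ^{*n}` equal to the image of `ρ` under
`x ↦ n^{1/α} x + d_n`. -/
def IsStableLaw (α : ℝ) (ρ : Measure ℝ) : Prop :=
  IsProbabilityMeasure ρ ∧ (¬ ∃ c : ℝ, ρ = Measure.dirac c) ∧
  ∀ n : ℕ, 1 ≤ n → ∃ d : ℝ,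
    convPow ρ n = Measure.map (fun x => (n : ℝ) ^ (1 / α) * x + d) ρ

/-- Convergence in distribution of real random variables to the law `ρ`. -/
def ConvInDistrib {Ω : Type} [MeasurableSpace Ω] (P : Measure Ω)
    (Z : ℕ → Ω → ℝ) (ρ : Measure ℝ) : Prop :=
  ∀ f : BoundedContinuousFunction ℝ ℝ,
    Tendsto (fun n => ∫ ω, f (Z n ω) ∂P) atTop (𝓝 (∫ x, f x ∂ρ))

/-- `μ^{(n)}`: the law of `Y^{(n)} = Y_1 ⋯ Y_n`. -/
def muN {q : ℕ} {Ω : Type} [MeasurableSpace Ω] (P : Measure Ω)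
    (X : ℕ → Ω → Mat q) (n : ℕ) : Measure (Mat q) :=
  Measure.map (fun ω => Yprod X n ω) P

/-- The contraction coefficient `c(g)`. -/
def cg {q : ℕ} (g : Mat q) : ℝ :=
  sSup {r : ℝ | ∃ x y, inBbar x ∧ inBbar y ∧ x ≠ y ∧
    r = dB (proj g x) (proj g y) / dB x y}

/-- The coefficient `c(μ^{(n)})`. -/
def cmu {q : ℕ} {Ω : Type} [MeasurableSpace Ω] (P : Measure Ω)
    (X : ℕ → Ω → Mat q) (n : ℕ) : ℝ :=
  sSup {r : ℝ | ∃ y y', inBbar y ∧ inBbar y' ∧ y ≠ y' ∧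
    r = ∫ g, dB (proj g y) (proj g y') / dB y y' ∂(muN P X n)}

/-- `κ(μ) = inf_{n ≥ 1} c(μ^{(n)})^{1/n}`. -/
def kappa {q : ℕ} {Ω : Type} [MeasurableSpace Ω] (P : Measure Ω)
    (X : ℕ → Ω → Mat q) : ℝ :=
  sInf {r : ℝ | ∃ n, 1 ≤ n ∧ r = cmu P X n ^ ((n : ℝ)⁻¹)}

/-- `ν` is `μ`-invariant. -/
def MuInvariant {q : ℕ} (μ : Measure (Mat q)) (ν : Measure (Fin q → ℝ)) : Prop :=
  ∀ f : BoundedContinuousFunction (Fin q → ℝ) ℝ,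
    ∫ x, (∫ g, f (proj g x) ∂μ) ∂ν = ∫ x, f x ∂ν

/-- The Fourier kernels `P_t` (so `P = P_0`). -/
def Ptop {q : ℕ} (μ : Measure (Mat q)) (t : ℝ) (f : (Fin q → ℝ) → ℂ)
    (x : Fin q → ℝ) : ℂ :=
  ∫ g, Complex.exp (Complex.I * (t : ℂ) * (xi g x : ℂ)) * f (proj g x) ∂μ

/-- The sup norm `‖f‖_u` over `B̄`. -/
def supnorm {q : ℕ} (f : (Fin q → ℝ) → ℂ) : ℝ :=
  sSup {r : ℝ | ∃ x, inBbar x ∧ r = ‖f x‖}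

/-- The Lipschitz seminorm `m(f)` with respect to the distance `d` on `B̄`. -/
def mlip {q : ℕ} (f : (Fin q → ℝ) → ℂ) : ℝ :=
  sSup {r : ℝ | ∃ x y, inBbar x ∧ inBbar y ∧ x ≠ y ∧
    r = ‖f x - f y‖ / dB x y}

/-- Membership in the space `L` of `d`-Lipschitz functions on `B̄`. -/
def memL {q : ℕ} (f : (Fin q → ℝ) → ℂ) : Prop :=
  ∃ M : ℝ, ∀ x y, inBbar x → inBbar y → ‖f x - f y‖ ≤ M * dB x y

/-- The norm `‖f‖_L = ‖f‖_u + m(f)`. -/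
def normL {q : ℕ} (f : (Fin q → ℝ) → ℂ) : ℝ := supnorm f + mlip f

/-- `‖g‖ = sup { ‖gx‖ : x ∈ B̄ }`. -/
def opg {q : ℕ} (g : Mat q) : ℝ :=
  sSup {r : ℝ | ∃ x, inBbar x ∧ r = nrm (g.mulVec x)}

/-- `v(g) = inf { ‖gx‖ : x ∈ B̄ }`. -/
def vg {q : ℕ} (g : Mat q) : ℝ :=
  sInf {r : ℝ | ∃ x, inBbar x ∧ r = nrm (g.mulVec x)}

/-- `ℓ(g) = |ln ‖g‖| + |ln v(g)|`. -/
def ellg {q : ℕ} (g : Mat q) : ℝ := |Real.log (opg g)| + |Real.log (vg g)|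

/-- `ε(t) = ∫ min(|t| ℓ(g), 2) dμ(g)`. -/
def epsT {q : ℕ} (μ : Measure (Mat q)) (t : ℝ) : ℝ :=
  ∫ g, min (|t| * ellg g) 2 ∂μ

/-- The operator norm of `P_t - P` on `L`. -/
def opNormDiff {q : ℕ} (μ : Measure (Mat q)) (t : ℝ) : ℝ :=
  sSup {r : ℝ | ∃ f : (Fin q → ℝ) → ℂ, memL f ∧ normL f ≤ 1 ∧
    r = normL (fun x => Ptop μ t f x - Ptop μ 0 f x)}

theorem _root_.ProbabilityTheory.iIndepFun.curry {Ω ι κ β : Type*} [MeasurableSpace Ω]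
    [MeasurableSpace β] {P : Measure Ω} [IsProbabilityMeasure P]
    {Y : ι × κ → Ω → β} (hY : ∀ p, Measurable (Y p)) (h : iIndepFun Y P) :
    iIndepFun (fun i ω j => Y (i, j) ω) P := by
  have (p : ι × κ) : IsProbabilityMeasure (P.map (Y p)) :=
    Measure.isProbabilityMeasure_map (hY p).aemeasurable
  have hcurry := Measure.infinitePi_map_curry fun i j => P.map (Y (i, j))
  simp only [Prod.mk.eta] at hcurry
  rw [iIndepFun_iff_map_fun_eq_infinitePi_map (fun i => by fun_prop),
    show (fun ω i j => Y (i, j) ω) = MeasurableEquiv.curry ι κ β ∘ (fun ω p => Y p ω) from rfl,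
    ← Measure.map_map (by fun_prop) (by fun_prop), h.map_fun_eq_infinitePi_map hY, hcurry]
  congr with i : 1
  exact ((h.precomp (Prod.mk_right_injective i)).map_fun_eq_infinitePi_map fun j => hY _).symm

theorem _root_.ProbabilityTheory.measure_limsup_preimage_eq_one {Ω β : Type*}
    [MeasurableSpace Ω] [MeasurableSpace β] {P : Measure Ω} {Z : ℕ → Ω → β}
    (hZ : ∀ k, Measurable (Z k)) (hind : iIndepFun Z P)
    (hident : ∀ k, IdentDistrib (Z k) (Z 0) P P)
    {G : Set β} (hG : MeasurableSet G) (hpos : P (Z 0 ⁻¹' G) ≠ 0) :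
    P (limsup (fun k => Z k ⁻¹' G) atTop) = 1 := by
  refine measure_limsup_eq_one (fun k => hZ k hG)
    ((iIndepSet_iff_meas_biInter fun k => hZ k hG).2 fun s =>
      hind.measure_inter_preimage_eq_mul s fun _ _ => hG) ?_
  simp_rw [fun k => (hident k).measure_mem_eq hG]
  exact ENNReal.tsum_const_eq_top_of_ne_zero hpos

section Blocks

variable {Ω β : Type*} [MeasurableSpace Ω] [MeasurableSpace β] {P : Measure Ω}
  [IsProbabilityMeasure P] {X : ℕ → Ω → β}

def block (X : ℕ → Ω → β) (m k : ℕ) : Ω → Fin m → β := fun ω j => X (k * m + j + 1) ω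

lemma measurable_block (hX : ∀ n, Measurable (X n)) (m k : ℕ) : Measurable (block X m k) :=
  measurable_pi_lambda _ fun _ => hX _

lemma iIndepFun_block (hX : ∀ n, Measurable (X n)) (hind : iIndepFun X P) (m : ℕ) [NeZero m] :
    iIndepFun (block X m) P :=
  -- `(Nat.divModEquiv m).symm` is `(k, j) ↦ k * m + j`
  (hind.precomp ((add_left_injective 1).comp (Nat.divModEquiv m).symm.injective)).curry
    fun _ => hX _

lemma map_block (hX : ∀ n, Measurable (X n)) (hind : iIndepFun X P)
    (hident : ∀ n, P.map (X n) = P.map (X 1)) (m k : ℕ) :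
    P.map (block X m k) = Measure.infinitePi fun _ => P.map (X 1) := by
  have : IsProbabilityMeasure (P.map (X 1)) := Measure.isProbabilityMeasure_map (hX 1).aemeasurable
  have hinj : Function.Injective fun j : Fin m => k * m + j + 1 := fun i j h =>
    Fin.ext (by simpa using h)
  unfold block
  rw [(hind.precomp hinj).map_fun_eq_infinitePi_map fun _ => hX _]
  simp only [hident]

lemma identDistrib_block (hX : ∀ n, Measurable (X n)) (hind : iIndepFun X P)
    (hident : ∀ n, P.map (X n) = P.map (X 1)) (m k : ℕ) :
    IdentDistrib (block X m k) (block X m 0) P P where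
  aemeasurable_fst := (measurable_block hX m k).aemeasurable
  aemeasurable_snd := (measurable_block hX m 0).aemeasurable
  map_eq := by rw [map_block hX hind hident, map_block hX hind hident]

end Blocks

section Matrices

variable {q : ℕ}

lemma memS_one : memS (1 : Mat q) :=
  ⟨fun i j => by by_cases h : i = j <;> simp [Matrix.one_apply, h],
    fun i => ⟨i, by simp⟩, fun j => ⟨j, by simp⟩⟩

lemma memS.mul {a b : Mat q} (ha : memS a) (hb : memS b) : memS (a * b) := by
  have hnonneg (i j k : Fin q) : 0 ≤ a i k * b k j := mul_nonneg (ha.1 i k) (hb.1 k j)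
  refine ⟨fun i j => ?_, fun i => ?_, fun j => ?_⟩ <;> simp only [Matrix.mul_apply]
  · exact sum_nonneg fun k _ => hnonneg i j k
  · obtain ⟨k, hk⟩ := ha.2.1 i
    obtain ⟨j, hj⟩ := hb.2.1 k
    exact ⟨j, sum_pos' (fun l _ => hnonneg i j l) ⟨k, mem_univ k, mul_pos hk hj⟩⟩
  · obtain ⟨k, hk⟩ := hb.2.2 j
    obtain ⟨i, hi⟩ := ha.2.2 k
    exact ⟨i, sum_pos' (fun l _ => hnonneg i j l) ⟨k, mem_univ k, mul_pos hi hk⟩⟩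

lemma memS0.mul_memS {a b : Mat q} (ha : memS0 a) (hb : memS b) : memS0 (a * b) := by
  intro i j
  obtain ⟨k, hk⟩ := hb.2.2 j
  exact sum_pos' (fun l _ => mul_nonneg (ha i l).le (hb.1 l j)) ⟨k, mem_univ k, mul_pos (ha i k) hk⟩

lemma memS_Xprod {Ω : Type} {X : ℕ → Ω → Mat q} (hS : ∀ n, 1 ≤ n → ∀ ω, memS (X n ω))
    (n : ℕ) (ω : Ω) : memS (Xprod X n ω) := by
  induction n with
  | zero => exact memS_one
  | succ n ih => exact (hS (n + 1) n.succ_pos ω).mul ih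

lemma measurableSet_memS0 : MeasurableSet {g : Mat q | memS0 g} := by
  simp only [memS0, Set.ofPred_forall]
  exact .iInter fun i => .iInter fun j => measurableSet_lt measurable_const (by fun_prop)

instance : MeasurableMul₂ (Mat q) where
  measurable_mul := by
    refine measurable_pi_lambda _ fun i => measurable_pi_lambda _ fun j => ?_
    simp only [Matrix.mul_apply]
    fun_prop

def blockProd : {m : ℕ} → (Fin m → Mat q) → Mat q
  | 0, _ => 1
  | m + 1, v => v (Fin.last m) * blockProd (Fin.init v)

lemma measurable_blockProd : ∀ {m : ℕ}, Measurable (blockProd : (Fin m → Mat q) → Mat q)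
  | 0 => measurable_const
  | _ + 1 => (measurable_pi_apply _).mul
      (measurable_blockProd.comp (measurable_pi_lambda _ fun _ => measurable_pi_apply _))

lemma Xprod_add {Ω : Type} (X : ℕ → Ω → Mat q) (a m : ℕ) (ω : Ω) :
    Xprod X (a + m) ω = blockProd (fun j : Fin m => X (a + j + 1) ω) * Xprod X a ω := by
  induction m with
  | zero => simp [blockProd]
  | succ m ih =>
    show X (a + m + 1) ω * Xprod X (a + m) ω = _
    rw [ih, ← mul_assoc]
    rfl

end Matrices

section ZeroOne

variable {q : ℕ} {Ω : Type} [MeasurableSpace Ω] {P : Measure Ω} {X : ℕ → Ω → Mat q}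

lemma CondC.exists_measure_ne_zero (hC : CondC P X) :
    ∃ m, 1 ≤ m ∧ P {ω | memS0 (Xprod X m ω)} ≠ 0 := by
  by_contra! h
  exact hC.ne' <| measure_mono_null (fun ω ⟨n, hn, hω⟩ => Set.mem_iUnion₂.2 ⟨n, hn, hω⟩)
    (measure_iUnion_null fun n => measure_iUnion_null (h n))

theorem CondC.measure_eq_one [IsProbabilityMeasure P] (hS : ∀ n, 1 ≤ n → ∀ ω, memS (X n ω))
    (hiid : IID P X) (hC : CondC P X) : P {ω | ∃ n, 1 ≤ n ∧ memS0 (Xprod X n ω)} = 1 := by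
  obtain ⟨hX, hind, hident⟩ := hiid
  obtain ⟨m, hm, hpos⟩ := hC.exists_measure_ne_zero
  have : NeZero m := ⟨by omega⟩
  set G := {v : Fin m → Mat q | memS0 (blockProd v)}
  have hG : MeasurableSet G := measurable_blockProd measurableSet_memS0
  have hblock0 : block X m 0 ⁻¹' G = {ω | memS0 (Xprod X m ω)} := by
    ext ω
    unfold block
    simpa [G, Xprod] using (congrArg memS0 (Xprod_add X 0 m ω)).symm
  have hsub : limsup (fun k => block X m k ⁻¹' G) atTop ⊆
      {ω | ∃ n, 1 ≤ n ∧ memS0 (Xprod X n ω)} := by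
    refine (limsup_le_iSup).trans (Set.iUnion_subset fun k ω hω => ⟨k * m + m, by omega, ?_⟩)
    rw [Xprod_add]
    exact memS0.mul_memS hω (memS_Xprod hS _ ω)
  have hlimsup : P (limsup (fun k => block X m k ⁻¹' G) atTop) = 1 :=
    measure_limsup_preimage_eq_one (measurable_block hX m) (iIndepFun_block hX hind m)
      (identDistrib_block hX hind hident m) hG (hblock0 ▸ hpos)
  exact le_antisymm prob_le_one (hlimsup ▸ measure_mono hsub)

end ZeroOne

theorem statement1_general {q : ℕ} {Ω : Type} [MeasurableSpace Ω]
    (P : Measure Ω) [IsProbabilityMeasure P] (X : ℕ → Ω → Mat q)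
    (hS : ∀ n, 1 ≤ n → ∀ ω, memS (X n ω)) (hiid : IID P X) :
    (CondC P X ↔ P {ω | hitT X ω < ⊤} = 1) ∧
    (CondC P X ↔ P {ω | ∃ n, 1 ≤ n ∧ memS0 (Xprod X n ω)} = 1) := by
  have hT : {ω | hitT X ω < ⊤} = {ω | ∃ n, 1 ≤ n ∧ memS0 (Xprod X n ω)} := by
    ext ω
    simp [hitT, iInf_lt_top]
  have hC : CondC P X ↔ P {ω | ∃ n, 1 ≤ n ∧ memS0 (Xprod X n ω)} = 1 :=
    ⟨CondC.measure_eq_one hS hiid, fun h => by rw [CondC, h]; exact one_pos⟩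
  exact ⟨hT ▸ hC, hC⟩

/-- **Lemma II.1 (first part).** Condition (C), `P[T < ∞] = 1` and
`P(⋃_{n≥1} [X^{(n)} ∈ S°]) = 1` are equivalent. -/
theorem statement1 {q : ℕ} (hq : 1 ≤ q) {Ω : Type} [MeasurableSpace Ω]
    (P : Measure Ω) [IsProbabilityMeasure P] (X : ℕ → Ω → Mat q)
    (hS : ∀ n, 1 ≤ n → ∀ ω, memS (X n ω)) (hiid : IID P X) :
    (CondC P X ↔ P {ω | hitT X ω < ⊤} = 1) ∧
    (CondC P X ↔ P {ω | ∃ n, 1 ≤ n ∧ memS0 (Xprod X n ω)} = 1) :=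
  statement1_general P X hS hiid

end StablePaper
end
end

section
/- For every g ∈ S and all z, x, y ∈ B̄ with d(x,y) < 1, one has |ξ(g,z)| ≤ ℓ(g) and |ξ(g,x) − ξ(g,y)| ≤ 2 ln(1/(1 − d(x,y))). In particular, for g ∈ S and x, y ∈ B̄, m(x,y)·‖gy‖ ≤ ‖gx‖. -/
open MeasureTheory ProbabilityTheory Filter Topology Matrix Finset

noncomputable section

namespace StablePaper

/-! On the cone `C̄`, `‖gx‖ = ∑ⱼ cⱼ xⱼ` where the column sums `cⱼ` of `g ∈ S` are positive, so
`x ↦ ‖gx‖` is linear and monotone there and is squeezed between the extreme column sums on `B̄`.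
Since `m(x,y) y ≤ x` coordinatewise, monotonicity gives `m(x,y) ‖gy‖ ≤ ‖gx‖`; with the roles
swapped this bounds `|ξ(g,x) − ξ(g,y)|` by `−ln s` for `s = m(x,y) m(y,x)`, and `(1 + s)² ≥ 4s`
is exactly `−ln s ≤ 2 ln(1/(1 − φ(s)))`. -/

variable {q : ℕ} {g : Mat q} {x y : Fin q → ℝ}

lemma sum_eq_one_of_inBbar (hx : inBbar x) : ∑ j, x j = 1 := by
  rw [← hx.2, nrm]
  exact Finset.sum_congr rfl fun j _ => (abs_of_nonneg (hx.1 j)).symm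

lemma exists_pos_of_inBbar (hx : inBbar x) : ∃ j, 0 < x j := by
  by_contra! h
  have : ∑ j, x j = 0 := Finset.sum_eq_zero fun j _ => le_antisymm (h j) (hx.1 j)
  simp [sum_eq_one_of_inBbar hx] at this

lemma nrm_nonneg (x : Fin q → ℝ) : 0 ≤ nrm x :=
  Finset.sum_nonneg fun i _ => abs_nonneg (x i)

lemma nrm_mulVec_eq_sum_colSum (hg : ∀ i j, 0 ≤ g i j) (hx : inCbar x) :
    nrm (g *ᵥ x) = ∑ j, (∑ i, g i j) * x j := by
  have hrow : ∀ i, |(g *ᵥ x) i| = ∑ j, g i j * x j := fun i =>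
    abs_of_nonneg (show 0 ≤ ∑ j, g i j * x j from
      Finset.sum_nonneg fun j _ => mul_nonneg (hg i j) (hx j))
  simp only [nrm, hrow, Finset.sum_mul]
  exact Finset.sum_comm

lemma le_nrm_mulVec (hg : ∀ i j, 0 ≤ g i j) {c : ℝ} (hc : ∀ j, c ≤ ∑ i, g i j)
    (hx : inBbar x) : c ≤ nrm (g *ᵥ x) := by
  rw [nrm_mulVec_eq_sum_colSum hg hx.1]
  calc c = ∑ j, c * x j := by rw [← Finset.mul_sum, sum_eq_one_of_inBbar hx, mul_one]
    _ ≤ ∑ j, (∑ i, g i j) * x j :=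
      Finset.sum_le_sum fun j _ => mul_le_mul_of_nonneg_right (hc j) (hx.1 j)

lemma nrm_mulVec_le (hg : ∀ i j, 0 ≤ g i j) {c : ℝ} (hc : ∀ j, ∑ i, g i j ≤ c)
    (hx : inBbar x) : nrm (g *ᵥ x) ≤ c := by
  rw [nrm_mulVec_eq_sum_colSum hg hx.1]
  calc ∑ j, (∑ i, g i j) * x j ≤ ∑ j, c * x j :=
      Finset.sum_le_sum fun j _ => mul_le_mul_of_nonneg_right (hc j) (hx.1 j)
    _ = c := by rw [← Finset.mul_sum, sum_eq_one_of_inBbar hx, mul_one]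

lemma colSum_pos (hg : memS g) (j : Fin q) : 0 < ∑ i, g i j := by
  obtain ⟨i, hi⟩ := hg.2.2 j
  exact Finset.sum_pos' (fun i _ => hg.1 i j) ⟨i, Finset.mem_univ i, hi⟩

lemma vg_le_nrm_mulVec (hx : inBbar x) : vg g ≤ nrm (g *ᵥ x) :=
  csInf_le ⟨0, fun _ ⟨_, _, hr⟩ => hr ▸ nrm_nonneg _⟩ ⟨x, hx, rfl⟩

lemma nrm_mulVec_le_opg (hg : ∀ i j, 0 ≤ g i j) (hx : inBbar x) : nrm (g *ᵥ x) ≤ opg g := by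
  have hcol : ∀ j, ∑ i, g i j ≤ ∑ k, ∑ i, g i k := fun j =>
    Finset.single_le_sum (f := fun k => ∑ i, g i k)
      (fun k _ => Finset.sum_nonneg fun i _ => hg i k) (Finset.mem_univ j)
  exact le_csSup ⟨_, fun _ ⟨_, hy, hr⟩ => hr ▸ nrm_mulVec_le hg hcol hy⟩ ⟨x, hx, rfl⟩

lemma vg_pos (hg : memS g) (hx : inBbar x) : 0 < vg g := by
  obtain ⟨j, -⟩ := exists_pos_of_inBbar hx
  obtain ⟨j₀, -, hj₀⟩ := Finset.exists_min_image Finset.univ (fun j => ∑ i, g i j)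
    ⟨j, Finset.mem_univ j⟩
  refine (colSum_pos hg j₀).trans_le (le_csInf ⟨_, x, hx, rfl⟩ ?_)
  rintro _ ⟨y, hy, rfl⟩
  exact le_nrm_mulVec hg.1 (fun j => hj₀ j (Finset.mem_univ j)) hy

lemma nrm_mulVec_pos (hg : memS g) (hx : inBbar x) : 0 < nrm (g *ᵥ x) :=
  (vg_pos hg hx).trans_le (vg_le_nrm_mulVec hx)

lemma abs_xi_le_ellg (hg : memS g) (hx : inBbar x) : |xi g x| ≤ ellg g := by
  have hv : vg g ≤ nrm (g *ᵥ x) := vg_le_nrm_mulVec hx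
  have hlow : Real.log (vg g) ≤ xi g x := Real.log_le_log (vg_pos hg hx) hv
  have hup : xi g x ≤ Real.log (opg g) :=
    Real.log_le_log (nrm_mulVec_pos hg hx) (nrm_mulVec_le_opg hg.1 hx)
  calc |xi g x| ≤ max |Real.log (vg g)| |Real.log (opg g)| := abs_le_max_abs_abs hlow hup
    _ ≤ ellg g := by
      rw [ellg, add_comm]
      exact max_le (le_add_of_nonneg_right (abs_nonneg _)) (le_add_of_nonneg_left (abs_nonneg _))

lemma mfun_nonneg (hx : inCbar x) : 0 ≤ mfun x y :=
  Real.sInf_nonneg fun _ ⟨i, hi, hr⟩ => hr ▸ div_nonneg (hx i) (le_of_lt hi)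

lemma mfun_mul_le (hx : inCbar x) (hy : inCbar y) (i : Fin q) : mfun x y * y i ≤ x i := by
  rcases (hy i).lt_or_eq with hi | hi
  · exact (le_div_iff₀ hi).mp <|
      csInf_le ((Set.toFinite _).image _).bddBelow ⟨i, hi, rfl⟩
  · rw [← hi, mul_zero]
    exact hx i

lemma mfun_le_one (hx : inBbar x) (hy : inBbar y) : mfun x y ≤ 1 := by
  simpa [← Finset.mul_sum, sum_eq_one_of_inBbar hx, sum_eq_one_of_inBbar hy] using
    Finset.sum_le_sum fun i (_ : i ∈ Finset.univ) => mfun_mul_le hx.1 hy.1 i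

lemma mfun_mul_nrm_mulVec_le (hg : ∀ i j, 0 ≤ g i j) (hx : inCbar x) (hy : inCbar y) :
    mfun x y * nrm (g *ᵥ y) ≤ nrm (g *ᵥ x) := by
  rw [nrm_mulVec_eq_sum_colSum hg hx, nrm_mulVec_eq_sum_colSum hg hy, Finset.mul_sum]
  refine Finset.sum_le_sum fun j _ => ?_
  rw [mul_left_comm]
  exact mul_le_mul_of_nonneg_left (mfun_mul_le hx hy j)
    (Finset.sum_nonneg fun i _ => hg i j)

lemma mfun_mul_mfun_pos_of_dB_lt_one (hx : inCbar x) (hy : inCbar y) (hd : dB x y < 1) :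
    0 < mfun x y * mfun y x := by
  refine (mul_nonneg (mfun_nonneg hx) (mfun_nonneg hy)).lt_of_ne fun h => ?_
  simp [dB, ← h] at hd

lemma log_le_xi_sub_xi (hg : memS g) (hx : inBbar x) (hy : inBbar y) (hm : 0 < mfun x y) :
    Real.log (mfun x y) ≤ xi g x - xi g y := by
  have hgy := nrm_mulVec_pos hg hy
  rw [le_sub_iff_add_le, xi, xi, ← Real.log_mul hm.ne' hgy.ne']
  exact Real.log_le_log (mul_pos hm hgy) (mfun_mul_nrm_mulVec_le hg.1 hx.1 hy.1)

lemma abs_xi_sub_xi_le (hg : memS g) (hx : inBbar x) (hy : inBbar y)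
    (hs : 0 < mfun x y * mfun y x) :
    |xi g x - xi g y| ≤ -Real.log (mfun x y * mfun y x) := by
  have hmx : 0 < mfun x y := pos_of_mul_pos_left hs (mfun_nonneg hy.1)
  have hmy : 0 < mfun y x := pos_of_mul_pos_right hs (mfun_nonneg hx.1)
  have h₁ := log_le_xi_sub_xi hg hx hy hmx
  have h₂ := log_le_xi_sub_xi hg hy hx hmy
  have h₁' := Real.log_nonpos (mfun_nonneg hx.1) (mfun_le_one hx hy)
  have h₂' := Real.log_nonpos (mfun_nonneg hy.1) (mfun_le_one hy hx)
  rw [Real.log_mul hmx.ne' hmy.ne', abs_le]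
  constructor <;> linarith

lemma neg_log_le_two_mul_log_one_div_one_sub {s : ℝ} (hs : 0 < s) :
    -Real.log s ≤ 2 * Real.log (1 / (1 - (1 - s) / (1 + s))) := by
  have hrecip : 1 / (1 - (1 - s) / (1 + s)) = (1 + s) / (2 * s) := by
    rw [one_sub_div (by positivity), one_div_div]
    ring
  have hsq : 2 * Real.log ((1 + s) / (2 * s)) = Real.log (((1 + s) / (2 * s)) ^ 2) := by
    rw [Real.log_pow]
    norm_num
  rw [hrecip, hsq, ← Real.log_inv]
  refine Real.log_le_log (by positivity) ?_
  rw [inv_eq_one_div, div_pow, div_le_div_iff₀ hs (by positivity)]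
  nlinarith [mul_nonneg hs.le (sq_nonneg (1 - s))]

theorem statement13_general {q : ℕ} (g : Mat q) (hg : memS g) :
    (∀ z x y : Fin q → ℝ, inBbar z → inBbar x → inBbar y → dB x y < 1 →
      |xi g z| ≤ ellg g ∧
      |xi g x - xi g y| ≤ 2 * Real.log (1 / (1 - dB x y))) ∧
    (∀ x y : Fin q → ℝ, inBbar x → inBbar y →
      mfun x y * nrm (g.mulVec y) ≤ nrm (g.mulVec x)) := by
  refine ⟨fun z x y hz hx hy hd => ⟨abs_xi_le_ellg hg hz, ?_⟩,
    fun x y hx hy => mfun_mul_nrm_mulVec_le hg.1 hx.1 hy.1⟩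
  have hs := mfun_mul_mfun_pos_of_dB_lt_one hx.1 hy.1 hd
  calc |xi g x - xi g y| ≤ -Real.log (mfun x y * mfun y x) := abs_xi_sub_xi_le hg hx hy hs
    _ ≤ 2 * Real.log (1 / (1 - dB x y)) := neg_log_le_two_mul_log_one_div_one_sub hs

/-- **Lemma III.1.** For `g ∈ S` and `z, x, y ∈ B̄` with `d(x,y) < 1`:
`|ξ(g,z)| ≤ ℓ(g)` and `|ξ(g,x) − ξ(g,y)| ≤ 2 ln(1/(1 − d(x,y)))`; moreover
`m(x,y)·‖gy‖ ≤ ‖gx‖` for all `x, y ∈ B̄`. -/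
theorem statement13 {q : ℕ} (hq : 1 ≤ q) (g : Mat q) (hg : memS g) :
    (∀ z x y : Fin q → ℝ, inBbar z → inBbar x → inBbar y → dB x y < 1 →
      |xi g z| ≤ ellg g ∧
      |xi g x - xi g y| ≤ 2 * Real.log (1 / (1 - dB x y))) ∧
    (∀ x y : Fin q → ℝ, inBbar x → inBbar y →
      mfun x y * nrm (g.mulVec y) ≤ nrm (g.mulVec x)) :=
  statement13_general g hg

end StablePaper
end
end

section
/- Suppose the tail conditions (i)–(ii) hold. Then for every x ∈ B, setting N_1^x = ‖Y_1 x‖ = Σ_{i,j=1}^q ⟨e_i, X_1 e_j⟩ x_i, one has lim_{u→+∞} (u^α/L(u))·P[N_1^x > e^u] = c_+ and lim_{u→+∞} (u^α/L(u))·P[N_1^x ≤ e^{−u}] = c_−. Moreover, for all x ∈ B and all u > 0, (u^α/L(u))·P[N_1^x > e^u] ≤ (u^α/L(u))·P[N_1 > e^u] and (u^α/L(u))·P[N_1^x ≤ e^{−u}] ≤ (u^α/L(u))·P[V_1 ≤ e^{−u}]. -/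
open MeasureTheory ProbabilityTheory Filter Topology Matrix Finset

noncomputable section

namespace StablePaper

/-!
Since `x ∈ B` has coordinates in `[δ, 1]` for some `δ > 0` and sums to one,
`N₁ˣ = ∑ⱼ xⱼ ∑ᵢ (X₁)ⱼᵢ` satisfies `δ N₁ ≤ N₁ˣ ≤ N₁` and `V₁ ≤ N₁ˣ`. The factor `δ`
only shifts `u` in the tails `P[N₁ > eᵘ]`, `P[N₁ ≤ e⁻ᵘ]` by a constant, which is
dominated by `(l - 1) u` for any `l ≠ 1`; slow variation of `L` turns the scaling
`u ↦ l u` into the factor `l ^ (-α)`, and letting `l → 1` squeezes the tails of `N₁ˣ`.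
-/

section Vectors

variable {q : ℕ} {x : Fin q → ℝ}

lemma inB.inBbar (hx : inB x) : inBbar x := ⟨fun i => (hx.1 i).le, hx.2⟩

lemma inBbar.sum_eq_one (hx : inBbar x) : ∑ i, x i = 1 := by
  rw [← hx.2, nrm]
  exact sum_congr rfl fun i _ => (abs_of_nonneg (hx.1 i)).symm

lemma inBbar.le_one (hx : inBbar x) (j : Fin q) : x j ≤ 1 := by
  rw [← hx.sum_eq_one]
  exact single_le_sum (fun i _ => hx.1 i) (mem_univ j)

lemma inB.exists_pos_le (hx : inB x) : ∃ δ > 0, ∀ j, δ ≤ x j := by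
  have : Nonempty (Fin q) := by
    rcases isEmpty_or_nonempty (Fin q) with h | h
    · simpa [nrm] using hx.2
    · exact h
  obtain ⟨j₀, hj₀⟩ := Finite.exists_min x
  exact ⟨x j₀, hx.1 j₀, hj₀⟩

end Vectors

section Matrices

variable {q : ℕ} {g : Mat q} {x : Fin q → ℝ}

lemma nrm_transpose_mulVec_eq (hg : ∀ i j, 0 ≤ g i j) (hx : inCbar x) :
    nrm (gᵀ.mulVec x) = ∑ j, x j * ∑ i, g j i := by
  have hcol : ∀ i, gᵀ.mulVec x i = ∑ j, g j i * x j := fun i => by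
    simp [Matrix.mulVec, dotProduct]
  calc nrm (gᵀ.mulVec x) = ∑ i, ∑ j, g j i * x j := by
        refine sum_congr rfl fun i _ => ?_
        rw [hcol, abs_of_nonneg (sum_nonneg fun j _ => mul_nonneg (hg j i) (hx j))]
    _ = ∑ j, x j * ∑ i, g j i := by
        rw [sum_comm]
        simp only [mul_sum, mul_comm]

lemma nrm_transpose_mulVec_le_N1fun (hg : ∀ i j, 0 ≤ g i j) (hx : inBbar x) :
    nrm (gᵀ.mulVec x) ≤ N1fun g := by
  rw [nrm_transpose_mulVec_eq hg hx.1, N1fun]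
  exact sum_le_sum fun j _ =>
    mul_le_of_le_one_left (sum_nonneg fun i _ => hg j i) (hx.le_one j)

lemma mul_N1fun_le_nrm_transpose_mulVec (hg : ∀ i j, 0 ≤ g i j) {δ : ℝ} (hδ : 0 ≤ δ)
    (hδx : ∀ j, δ ≤ x j) : δ * N1fun g ≤ nrm (gᵀ.mulVec x) := by
  rw [nrm_transpose_mulVec_eq hg fun j => hδ.trans (hδx j), N1fun, mul_sum]
  exact sum_le_sum fun j _ =>
    mul_le_mul_of_nonneg_right (hδx j) (sum_nonneg fun i _ => hg j i)

lemma V1fun_le_nrm_transpose_mulVec (hg : ∀ i j, 0 ≤ g i j) (hx : inBbar x) :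
    V1fun g ≤ nrm (gᵀ.mulVec x) := by
  have hV : ∀ j, V1fun g ≤ ∑ i, g j i := fun j =>
    csInf_le ⟨0, by rintro r ⟨i, rfl⟩; exact sum_nonneg fun k _ => hg i k⟩ ⟨j, rfl⟩
  calc V1fun g = ∑ j, x j * V1fun g := by rw [← sum_mul, hx.sum_eq_one, one_mul]
    _ ≤ ∑ j, x j * ∑ i, g j i :=
        sum_le_sum fun j _ => mul_le_mul_of_nonneg_left (hV j) (hx.1 j)
    _ = nrm (gᵀ.mulVec x) := (nrm_transpose_mulVec_eq hg hx.1).symm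

end Matrices

lemma eventually_exp_mul_le_mul_exp_mul {δ a b : ℝ} (hδ : 0 < δ) (hab : a < b) :
    ∀ᶠ u in atTop, Real.exp (a * u) ≤ δ * Real.exp (b * u) := by
  filter_upwards [tendsto_id.const_mul_atTop (sub_pos.2 hab) |>.eventually_ge_atTop
    (-Real.log δ)] with u hu
  rw [← Real.exp_log hδ, ← Real.exp_add, Real.exp_le_exp]
  simp only [id] at hu
  linarith

namespace SlowlyVarying

variable {α : ℝ} {L : ℝ → ℝ} (hL : SlowlyVarying L) {T S : ℝ → ℝ} {c : ℝ}
include hL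

lemma rpow_div_nonneg {u : ℝ} (hu : 0 < u) : 0 ≤ u ^ α / L u :=
  div_nonneg (Real.rpow_nonneg hu.le α) (hL.1 u hu).le

lemma tendsto_rpow_div_mul_comp_mul
    (hT : Tendsto (fun u => u ^ α / L u * T u) atTop (𝓝 c)) {l : ℝ} (hl : 0 < l) :
    Tendsto (fun u => u ^ α / L u * T (l * u)) atTop (𝓝 (c / l ^ α)) := by
  have hlim : Tendsto (fun u => (l * u) ^ α / L (l * u) * T (l * u) *
      (L (l * u) / L u) / l ^ α) atTop (𝓝 (c * 1 / l ^ α)) :=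
    ((hT.comp (tendsto_id.const_mul_atTop hl)).mul (hL.2 l hl)).div_const _
  rw [mul_one] at hlim
  refine hlim.congr' ?_
  filter_upwards [eventually_gt_atTop 0] with u hu
  have hLlu := (hL.1 (l * u) (mul_pos hl hu)).ne'
  have hla : l ^ α ≠ 0 := (Real.rpow_pos_of_pos hl α).ne'
  simp only [Real.mul_rpow hl.le hu.le]
  field_simp

lemma eventually_lt_of_scaled_le {F : Filter ℝ} [F.NeBot] (hF : F ≤ 𝓝 1)
    (hT : Tendsto (fun u => u ^ α / L u * T u) atTop (𝓝 c))
    (hTS : ∀ᶠ l in F, ∀ᶠ u in atTop, T (l * u) ≤ S u) {a : ℝ} (ha : a < c) :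
    ∀ᶠ u in atTop, a < u ^ α / L u * S u := by
  have hcont : ContinuousAt (fun l : ℝ => c / l ^ α) 1 :=
    continuousAt_const.div (Real.continuousAt_rpow_const 1 α (Or.inl one_ne_zero)) (by simp)
  obtain ⟨l, hal, hl, hTSl⟩ := ((hcont.tendsto.mono_left hF).eventually
    (lt_mem_nhds (by simpa using ha))).and
    (((eventually_gt_nhds one_pos).filter_mono hF).and hTS) |>.exists
  filter_upwards [(hL.tendsto_rpow_div_mul_comp_mul hT hl).eventually (lt_mem_nhds hal),
    hTSl, eventually_gt_atTop 0] with u hlt hle hu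
  exact hlt.trans_le (mul_le_mul_of_nonneg_left hle (hL.rpow_div_nonneg hu))

lemma tendsto_of_scaled_bounds {F₁ F₂ : Filter ℝ} [F₁.NeBot] [F₂.NeBot]
    (hF₁ : F₁ ≤ 𝓝 1) (hF₂ : F₂ ≤ 𝓝 1)
    (hT : Tendsto (fun u => u ^ α / L u * T u) atTop (𝓝 c))
    (hTS : ∀ᶠ l in F₁, ∀ᶠ u in atTop, T (l * u) ≤ S u)
    (hST : ∀ᶠ l in F₂, ∀ᶠ u in atTop, S u ≤ T (l * u)) :
    Tendsto (fun u => u ^ α / L u * S u) atTop (𝓝 c) := by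
  refine tendsto_order.2 ⟨fun a ha => hL.eventually_lt_of_scaled_le hF₁ hT hTS ha,
    fun b hb => ?_⟩
  have hnegT : Tendsto (fun u => u ^ α / L u * (-T u)) atTop (𝓝 (-c)) := by
    simpa only [mul_neg] using hT.neg
  have hnegTS : ∀ᶠ l in F₂, ∀ᶠ u in atTop, -T (l * u) ≤ -S u :=
    hST.mono fun l h => h.mono fun u => neg_le_neg
  filter_upwards [hL.eventually_lt_of_scaled_le hF₂ hnegT hnegTS (neg_lt_neg hb)]
    with u hu
  simpa only [mul_neg, neg_lt_neg_iff] using hu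

end SlowlyVarying

section Tails

variable {Ω : Type} [MeasurableSpace Ω] {P : Measure Ω} [IsFiniteMeasure P]
  {α : ℝ} {L : ℝ → ℝ} {c δ : ℝ} {Z N : Ω → ℝ}

lemma tendsto_upper_tail_of_mul_le_of_le (hL : SlowlyVarying L) (hδ : 0 < δ)
    (hNZ : ∀ ω, δ * N ω ≤ Z ω) (hZN : ∀ ω, Z ω ≤ N ω)
    (hN : Tendsto (fun u => u ^ α / L u * (P {ω | Real.exp u < N ω}).toReal)
      atTop (𝓝 c)) :
    Tendsto (fun u => u ^ α / L u * (P {ω | Real.exp u < Z ω}).toReal)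
      atTop (𝓝 c) := by
  refine hL.tendsto_of_scaled_bounds (T := fun u => (P {ω | Real.exp u < N ω}).toReal)
    (F₁ := 𝓝[>] 1) nhdsWithin_le_nhds (pure_le_nhds 1) hN ?_ ?_
  · filter_upwards [self_mem_nhdsWithin] with l (hl : 1 < l)
    filter_upwards [eventually_exp_mul_le_mul_exp_mul hδ hl] with u hu
    refine measureReal_mono fun ω (hω : Real.exp (l * u) < N ω) => ?_
    rw [one_mul] at hu
    exact hu.trans_lt ((mul_lt_mul_of_pos_left hω hδ).trans_le (hNZ ω))
  · refine eventually_pure.2 (Eventually.of_forall fun u => measureReal_mono ?_)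
    intro ω (hω : Real.exp u < Z ω)
    show Real.exp (1 * u) < N ω
    rw [one_mul]
    exact hω.trans_le (hZN ω)

lemma tendsto_lower_tail_of_mul_le_of_le (hL : SlowlyVarying L) (hδ : 0 < δ)
    (hNZ : ∀ ω, δ * N ω ≤ Z ω) (hZN : ∀ ω, Z ω ≤ N ω)
    (hN : Tendsto (fun u => u ^ α / L u * (P {ω | N ω ≤ Real.exp (-u)}).toReal)
      atTop (𝓝 c)) :
    Tendsto (fun u => u ^ α / L u * (P {ω | Z ω ≤ Real.exp (-u)}).toReal)
      atTop (𝓝 c) := by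
  refine hL.tendsto_of_scaled_bounds (T := fun u => (P {ω | N ω ≤ Real.exp (-u)}).toReal)
    (F₂ := 𝓝[<] 1) (pure_le_nhds 1) nhdsWithin_le_nhds hN ?_ ?_
  · refine eventually_pure.2 (Eventually.of_forall fun u => measureReal_mono ?_)
    intro ω (hω : N ω ≤ Real.exp (-(1 * u)))
    rw [one_mul] at hω
    exact (hZN ω).trans hω
  · filter_upwards [self_mem_nhdsWithin] with l (hl : l < 1)
    filter_upwards [eventually_exp_mul_le_mul_exp_mul hδ (neg_lt_neg hl)] with u hu
    refine measureReal_mono fun ω (hω : Z ω ≤ Real.exp (-u)) => ?_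
    rw [neg_one_mul, neg_mul] at hu
    exact le_of_mul_le_mul_left ((hNZ ω).trans (hω.trans hu)) hδ

end Tails

theorem statement18_general {q : ℕ} {Ω : Type} [MeasurableSpace Ω]
    (P : Measure Ω) [IsProbabilityMeasure P]
    (X1 : Ω → Mat q) (hS : ∀ ω, memS (X1 ω))
    (α : ℝ)
    (L : ℝ → ℝ) (hL : SlowlyVarying L)
    (cp cm : ℝ)
    (hi1 : Tendsto (fun u : ℝ =>
      u ^ α / L u * (P {ω | Real.exp u < N1fun (X1 ω)}).toReal) atTop (𝓝 cp))
    (hi2 : Tendsto (fun u : ℝ =>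
      u ^ α / L u * (P {ω | N1fun (X1 ω) ≤ Real.exp (-u)}).toReal) atTop (𝓝 cm))
    (x : Fin q → ℝ) (hx : inB x) :
    Tendsto (fun u : ℝ => u ^ α / L u *
      (P {ω | Real.exp u < nrm ((X1 ω)ᵀ.mulVec x)}).toReal) atTop (𝓝 cp) ∧
    Tendsto (fun u : ℝ => u ^ α / L u *
      (P {ω | nrm ((X1 ω)ᵀ.mulVec x) ≤ Real.exp (-u)}).toReal) atTop (𝓝 cm) ∧
    (∀ u : ℝ, 0 < u →
      u ^ α / L u * (P {ω | Real.exp u < nrm ((X1 ω)ᵀ.mulVec x)}).toReal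
        ≤ u ^ α / L u * (P {ω | Real.exp u < N1fun (X1 ω)}).toReal) ∧
    (∀ u : ℝ, 0 < u →
      u ^ α / L u * (P {ω | nrm ((X1 ω)ᵀ.mulVec x) ≤ Real.exp (-u)}).toReal
        ≤ u ^ α / L u * (P {ω | V1fun (X1 ω) ≤ Real.exp (-u)}).toReal) := by
  obtain ⟨δ, hδ, hδx⟩ := hx.exists_pos_le
  have hZN := fun ω => nrm_transpose_mulVec_le_N1fun (hS ω).1 hx.inBbar
  have hNZ := fun ω => mul_N1fun_le_nrm_transpose_mulVec (hS ω).1 hδ.le hδx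
  have hVZ := fun ω => V1fun_le_nrm_transpose_mulVec (hS ω).1 hx.inBbar
  refine ⟨tendsto_upper_tail_of_mul_le_of_le hL hδ hNZ hZN hi1,
    tendsto_lower_tail_of_mul_le_of_le hL hδ hNZ hZN hi2, fun u hu => ?_, fun u hu => ?_⟩
  · exact mul_le_mul_of_nonneg_left (measureReal_mono fun ω hω => lt_of_lt_of_le hω (hZN ω))
      (hL.rpow_div_nonneg hu)
  · exact mul_le_mul_of_nonneg_left (measureReal_mono fun ω hω => le_trans (hVZ ω) hω)
      (hL.rpow_div_nonneg hu)

/-- Under the tail conditions (i)-(ii), for every `x ∈ B` the variable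
`N₁^x = ‖Y₁x‖` has the same tail behaviour as `N₁`, with the uniform
domination stated in the proof of Proposition IV.1. -/
theorem statement18 {q : ℕ} (hq : 1 ≤ q) {Ω : Type} [MeasurableSpace Ω]
    (P : Measure Ω) [IsProbabilityMeasure P]
    (X1 : Ω → Mat q) (hmeas : Measurable X1) (hS : ∀ ω, memS (X1 ω))
    (α : ℝ) (hα0 : 0 < α) (hα2 : α ≤ 2)
    (L : ℝ → ℝ) (hL : SlowlyVarying L)
    (hLunb : α = 2 → ∀ M : ℝ, ∃ u : ℝ, 0 < u ∧ M < L u)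
    (cp cm : ℝ) (hcp : 0 ≤ cp) (hcm : 0 ≤ cm) (hcpm : 0 < cp + cm)
    (hi1 : Tendsto (fun u : ℝ =>
      u ^ α / L u * (P {ω | Real.exp u < N1fun (X1 ω)}).toReal) atTop (𝓝 cp))
    (hi2 : Tendsto (fun u : ℝ =>
      u ^ α / L u * (P {ω | N1fun (X1 ω) ≤ Real.exp (-u)}).toReal) atTop (𝓝 cm))
    (hii : ∃ M : ℝ, ∀ᶠ u in atTop,
      u ^ α / L u * (P {ω | V1fun (X1 ω) ≤ Real.exp (-u)}).toReal ≤ M)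
    (x : Fin q → ℝ) (hx : inB x) :
    Tendsto (fun u : ℝ => u ^ α / L u *
      (P {ω | Real.exp u < nrm ((X1 ω)ᵀ.mulVec x)}).toReal) atTop (𝓝 cp) ∧
    Tendsto (fun u : ℝ => u ^ α / L u *
      (P {ω | nrm ((X1 ω)ᵀ.mulVec x) ≤ Real.exp (-u)}).toReal) atTop (𝓝 cm) ∧
    (∀ u : ℝ, 0 < u →
      u ^ α / L u * (P {ω | Real.exp u < nrm ((X1 ω)ᵀ.mulVec x)}).toReal
        ≤ u ^ α / L u * (P {ω | Real.exp u < N1fun (X1 ω)}).toReal) ∧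
    (∀ u : ℝ, 0 < u →
      u ^ α / L u * (P {ω | nrm ((X1 ω)ᵀ.mulVec x) ≤ Real.exp (-u)}).toReal
        ≤ u ^ α / L u * (P {ω | V1fun (X1 ω) ≤ Real.exp (-u)}).toReal) :=
  statement18_general P X1 hS α L hL cp cm hi1 hi2 x hx

end StablePaper
end
end
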